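/- arXiv:1011.2750 — 2 statements merged into one kernel-verified Lean document; each statement's English description precedes it below -/
import Mathlib

section
/- Let η : ℝ → ℝ be convex and continuously differentiable, let F : ℝ → ℝ^k be continuously differentiable, fix c ∈ ℝ, and define Q : ℝ → ℝ^k componentwise by Q_j(u) = ∫_c^u η'(r)·F_j'(r) dr. Then for all a, b ∈ ℝ and every vector n ∈ ℝ^k: |(Q(b) − Q(a) − (1/2)·(F(b) − F(a))·(η'(b) + η'(a))) · n| ≤ (1/2)·(∫_0^1 |F'(a + s·(b − a)) · n| ds)·(η'(b) − η'(a))·(b − a). -/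
/-!
Since `Q(b) - Q(a) = ∫_a^b η' F'` and `F(b) - F(a) = ∫_a^b F'`, the quantity in the absolute
value is `∫_a^b (η'(r) - m) (F'(r) · n) dr`, where `m` is the mean of `η'(a)` and `η'(b)`.
As `η'` is monotone, `η'(r)` lies between `η'(a)` and `η'(b)` for `r` between `a` and `b`, so
`|η'(r) - m| ≤ |η'(b) - η'(a)| / 2`; the substitution `r = a + s (b - a)` and
`|b - a| |η'(b) - η'(a)| = (η'(b) - η'(a)) (b - a)` (monotonicity again) give the bound.
Everything is linear in `F`, so it suffices to treat the scalar flux `u ↦ F(u) · n`.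
-/

open intervalIntegral Set

theorem integral_mul_deriv_sub_trapezoid_eq {φ f : ℝ → ℝ} (hφ : Continuous φ)
    (hf : ContDiff ℝ 1 f) (c a b : ℝ) :
    (∫ r in c..b, φ r * deriv f r) - (∫ r in c..a, φ r * deriv f r)
        - (1 / 2) * (f b - f a) * (φ b + φ a)
      = ∫ r in a..b, (φ r - (φ a + φ b) / 2) * deriv f r := by
  have hf' : Continuous (deriv f) := hf.continuous_deriv le_rfl
  have hftc : ∫ r in a..b, deriv f r = f b - f a :=
    integral_deriv_eq_sub (fun x _ => (hf.differentiable one_ne_zero).differentiableAt)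
      (hf'.intervalIntegrable _ _)
  have hint : ∀ x y, IntervalIntegrable (fun r => φ r * deriv f r) MeasureTheory.volume x y :=
    fun _ _ => (hφ.mul hf').intervalIntegrable _ _
  simp_rw [sub_mul]
  rw [integral_interval_sub_left (hint _ _) (hint _ _),
    integral_sub (hint _ _) (hf'.intervalIntegrable _ _ |>.const_mul _),
    integral_const_mul, hftc]
  ring

theorem abs_sub_midpoint_le_of_mem_uIcc {x u v : ℝ} (hx : x ∈ uIcc u v) :
    |x - (u + v) / 2| ≤ |v - u| / 2 := by
  rcases mem_uIcc.1 hx with ⟨hux, hxv⟩ | ⟨hvx, hxu⟩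
  · rw [abs_of_nonneg (by linarith : 0 ≤ v - u), abs_le]; constructor <;> linarith
  · rw [abs_of_nonpos (by linarith : v - u ≤ 0), abs_le]; constructor <;> linarith

theorem intervalIntegral.integral_eq_sub_smul_integral_comp_zero_one {E : Type*}
    [NormedAddCommGroup E] [NormedSpace ℝ E] (h : ℝ → E) (a b : ℝ) :
    ∫ r in a..b, h r = (b - a) • ∫ s in (0:ℝ)..1, h (a + s * (b - a)) := by
  simpa [mul_comm] using (smul_integral_comp_add_mul (a := 0) (b := 1) h (b - a) a).symm

theorem abs_integral_sub_midpoint_mul_le {g G : ℝ → ℝ} (hg : Monotone g) (a b : ℝ)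
    (hG : IntervalIntegrable G MeasureTheory.volume a b) :
    |∫ r in a..b, (g r - (g a + g b) / 2) * G r|
      ≤ (1 / 2) * (∫ s in (0:ℝ)..1, |G (a + s * (b - a))|) * ((g b - g a) * (b - a)) := by
  have hprod : 0 ≤ (g b - g a) * (b - a) := (hg.monovary monotone_id).sub_mul_sub_nonneg a b
  have hpt : ∀ r ∈ uIcc a b, ‖(g r - (g a + g b) / 2) * G r‖ ≤ |g b - g a| / 2 * |G r| :=
    fun r hr => by
      rw [Real.norm_eq_abs, abs_mul]
      exact mul_le_mul_of_nonneg_right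
        (abs_sub_midpoint_le_of_mem_uIcc (hg.mapsTo_uIcc hr)) (abs_nonneg _)
  calc |∫ r in a..b, (g r - (g a + g b) / 2) * G r|
      ≤ |∫ r in a..b, (|g b - g a| / 2 * |G r|)| :=
        norm_integral_le_abs_of_norm_le
          (MeasureTheory.ae_restrict_of_forall_mem measurableSet_uIoc
            fun r hr => hpt r (uIoc_subset_uIcc hr))
          (hG.norm.const_mul _)
    _ = |g b - g a| / 2 * |b - a| * ∫ s in (0:ℝ)..1, |G (a + s * (b - a))| := by
        rw [integral_const_mul, integral_eq_sub_smul_integral_comp_zero_one, smul_eq_mul,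
          abs_mul, abs_mul, abs_of_nonneg (integral_nonneg zero_le_one fun _ _ => abs_nonneg _),
          abs_of_nonneg (by positivity : 0 ≤ |g b - g a| / 2)]
        ring
    _ = _ := by
        rw [div_mul_eq_mul_div, ← abs_mul, abs_of_nonneg hprod]
        ring

theorem abs_entropy_flux_sub_le {η f : ℝ → ℝ} (hconv : ConvexOn ℝ univ η)
    (hη : ContDiff ℝ 1 η) (hf : ContDiff ℝ 1 f) (c a b : ℝ) :
    |(∫ r in c..b, deriv η r * deriv f r) - (∫ r in c..a, deriv η r * deriv f r)
        - (1 / 2) * (f b - f a) * (deriv η b + deriv η a)|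
      ≤ (1 / 2) * (∫ s in (0:ℝ)..1, |deriv f (a + s * (b - a))|) *
          ((deriv η b - deriv η a) * (b - a)) := by
  have hmono : Monotone (deriv η) := monotoneOn_univ.1 <|
    hconv.monotoneOn_deriv fun x _ => (hη.differentiable one_ne_zero).differentiableAt
  rw [integral_mul_deriv_sub_trapezoid_eq (hη.continuous_deriv le_rfl) hf]
  exact abs_integral_sub_midpoint_mul_le hmono a b
    ((hf.continuous_deriv le_rfl).intervalIntegrable _ _)

theorem deriv_sum_mul_const {ι : Type*} [Fintype ι] (F : ℝ → ι → ℝ)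
    (hF : ∀ j, Differentiable ℝ fun u => F u j) (n : ι → ℝ) :
    deriv (fun u => ∑ j, F u j * n j) = fun r => ∑ j, deriv (fun u => F u j) r * n j := by
  funext r
  rw [deriv_fun_sum fun j _ => (hF j r).mul_const _]
  simp only [deriv_mul_const_field]

/-- Entropy-flux estimate: for the entropy flux `Q_j(u) = ∫_c^u η'(r) F_j'(r) dr`
associated with a convex `C¹` entropy `η` and a `C¹` flux `F : ℝ → ℝ^k`, and for all
traces `a = v⁻`, `b = v⁺` and every face normal `n ∈ ℝ^k`,
`|(Q(b) − Q(a) − ½(F(b) − F(a))(η'(b) + η'(a))) · n|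
   ≤ ½ (∫_0^1 |F'(a + s(b−a)) · n| ds) (η'(b) − η'(a)) (b − a)`. -/
theorem entropy_flux_abs_bound {k : ℕ} (η : ℝ → ℝ)
    (hconv : ConvexOn ℝ Set.univ η) (hη : ContDiff ℝ 1 η)
    (F : ℝ → Fin k → ℝ) (hF : ∀ j, ContDiff ℝ 1 fun u => F u j)
    (c : ℝ) (Q : ℝ → Fin k → ℝ)
    (hQ : ∀ u j, Q u j = ∫ r in c..u, deriv η r * deriv (fun x => F x j) r)
    (a b : ℝ) (n : Fin k → ℝ) :
    |∑ j, (Q b j - Q a j - (1 / 2) * (F b j - F a j) * (deriv η b + deriv η a)) * n j|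
      ≤ (1 / 2) * (∫ s in (0:ℝ)..1, |∑ j, deriv (fun x => F x j) (a + s * (b - a)) * n j|) *
          ((deriv η b - deriv η a) * (b - a)) := by
  set f : ℝ → ℝ := fun u => ∑ j, F u j * n j with hf_def
  have hf : ContDiff ℝ 1 f := ContDiff.sum fun j _ => (hF j).mul contDiff_const
  have hderiv : deriv f = fun r => ∑ j, deriv (fun x => F x j) r * n j :=
    deriv_sum_mul_const F (fun j => (hF j).differentiable one_ne_zero) n
  have hQn : ∀ u, ∑ j, Q u j * n j = ∫ r in c..u, deriv η r * deriv f r := fun u => by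
    have hint : ∀ j, IntervalIntegrable (fun r => deriv η r * (deriv (fun x => F x j) r * n j))
        MeasureTheory.volume c u := fun j => ((hη.continuous_deriv le_rfl).mul
      (((hF j).continuous_deriv le_rfl).mul continuous_const)).intervalIntegrable _ _
    simp only [hderiv, Finset.mul_sum]
    rw [integral_finsetSum fun j _ => hint j]
    simp only [hQ, ← mul_assoc, integral_mul_const]
  have hlhs : ∑ j, (Q b j - Q a j - (1 / 2) * (F b j - F a j) * (deriv η b + deriv η a)) * n j
      = ∑ j, Q b j * n j - ∑ j, Q a j * n j
          - (1 / 2) * (f b - f a) * (deriv η b + deriv η a) := by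
    simp only [hf_def, ← Finset.sum_sub_distrib, Finset.mul_sum, Finset.sum_mul]
    exact Finset.sum_congr rfl fun j _ => by ring
  have hscalar := abs_entropy_flux_sub_le hconv hη hf c a b
  rw [← hQn, ← hQn, hderiv] at hscalar
  rwa [hlhs]
end

section
/- Let q ≥ 2 be an even integer. Then for all a, g ∈ ℝ: 3·|a − g|·|g|^(q−1) ≤ (a − g)·(a^(q−1) − g^(q−1)) + (q − 1)·q^(−q/(q−1))·3^(q/(q−1))·2^((q−2)/(q−1))·g^q. -/
/-!
For odd `p` and `a + b ≥ 0` one has `(a + b)^p ≤ 2^(p-1) (a^p + b^p)`; with `b = -g` and `p = q - 1`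
this makes the jump term dominate `|a - g|^q / 2^(q-2)`. Young's inequality with exponents `q` and
`q/(q-1)`, weighted so that its `|a - g|^q` term is exactly this bound, then produces the `g^q` term
with the stated constant.
-/

section OddPow

variable {R : Type*} [CommRing R] [LinearOrder R] [IsStrictOrderedRing R] {n : ℕ}

lemma Odd.add_pow_le_pow_add_pow (hn : Odd n) {a b : R} (hb : b ≤ 0) (hab : 0 ≤ a + b) :
    (a + b) ^ n ≤ a ^ n + b ^ n := by
  have hsuper := pow_add_pow_le hab (neg_nonneg.2 hb) hn.pos.ne'
  rw [add_neg_cancel_right, hn.neg_pow] at hsuper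
  linarith

lemma Odd.add_pow_le (hn : Odd n) {a b : R} (hab : 0 ≤ a + b) :
    (a + b) ^ n ≤ 2 ^ (n - 1) * (a ^ n + b ^ n) := by
  wlog hba : b ≤ a generalizing a b
  · rw [add_comm a, add_comm (a ^ n)] at *
    exact this hab (le_of_not_ge hba)
  rcases le_total 0 b with hb | hb
  · exact _root_.add_pow_le (hb.trans hba) hb n
  · calc (a + b) ^ n ≤ 2 ^ (n - 1) * (a + b) ^ n :=
          le_mul_of_one_le_left (pow_nonneg hab n) (one_le_pow₀ one_le_two)
      _ ≤ 2 ^ (n - 1) * (a ^ n + b ^ n) := by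
          gcongr
          exact hn.add_pow_le_pow_add_pow hb hab

lemma Even.abs_sub_pow_le {q : ℕ} (hq : Even q) (hq0 : q ≠ 0) (a b : R) :
    |a - b| ^ q ≤ 2 ^ (q - 2) * ((a - b) * (a ^ (q - 1) - b ^ (q - 1))) := by
  wlog hba : b ≤ a generalizing a b
  · rw [abs_sub_comm, show (a - b) * (a ^ (q - 1) - b ^ (q - 1)) =
      (b - a) * (b ^ (q - 1) - a ^ (q - 1)) by ring]
    exact this b a (le_of_not_ge hba)
  have hodd : Odd (q - 1) := Nat.Even.sub_odd (Nat.one_le_iff_ne_zero.2 hq0) hq odd_one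
  have hpow := hodd.add_pow_le (a := a) (b := -b) (by linarith)
  rw [hodd.neg_pow, ← sub_eq_add_neg, ← sub_eq_add_neg, Nat.sub_sub] at hpow
  calc |a - b| ^ q = (a - b) ^ (q - 1) * (a - b) := by
        rw [abs_of_nonneg (sub_nonneg.2 hba), ← pow_succ, Nat.sub_add_cancel
          (Nat.one_le_iff_ne_zero.2 hq0)]
    _ ≤ 2 ^ (q - 2) * (a ^ (q - 1) - b ^ (q - 1)) * (a - b) := by
        gcongr
    _ = 2 ^ (q - 2) * ((a - b) * (a ^ (q - 1) - b ^ (q - 1))) := by ring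

end OddPow

namespace Real

lemma young_inequality_of_nonneg_weighted {x y K r : ℝ} (hx : 0 ≤ x) (hy : 0 ≤ y) (hK : 0 < K)
    (hr : 1 < r) :
    x * y ≤ K * x ^ r + (r - 1) * r ^ (-r / (r - 1)) * K ^ (-1 / (r - 1)) * y ^ (r / (r - 1)) := by
  have hr0 : 0 < r := by linarith
  have hr1 : r - 1 ≠ 0 := by linarith
  set c := (r * K) ^ r⁻¹
  have hc : 0 < c := by positivity
  have hyoung := young_inequality_of_nonneg (mul_nonneg hc.le hx) (div_nonneg hy hc.le)
    (HolderConjugate.conjExponent hr)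
  have hcr : c ^ r = r * K := by
    rw [← rpow_mul (by positivity), inv_mul_cancel₀ hr0.ne', rpow_one]
  have hcs : c ^ conjExponent r = r ^ (1 / (r - 1)) * K ^ (1 / (r - 1)) := by
    rw [← rpow_mul (by positivity), mul_rpow hr0.le hK.le, conjExponent]
    congr 2 <;> field_simp
  have hrr : r ^ (-r / (r - 1)) = r⁻¹ * (r ^ (1 / (r - 1)))⁻¹ := by
    rw [← rpow_neg_one, ← rpow_neg hr0.le, ← rpow_add hr0]
    congr 1
    field_simp
    ring
  have hxy : c * x * (y / c) = x * y := by field_simp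
  have hfirst : (c * x) ^ r / r = K * x ^ r := by
    rw [mul_rpow hc.le hx, hcr]; field_simp
  have hsecond : (y / c) ^ conjExponent r / conjExponent r =
      (r - 1) * r ^ (-r / (r - 1)) * K ^ (-1 / (r - 1)) * y ^ (r / (r - 1)) := by
    rw [div_rpow hy hc.le, hcs, hrr, neg_div, rpow_neg hK.le, conjExponent]
    field_simp
  rwa [hxy, hfirst, hsecond] at hyoung

end Real

/-- Scalar Young-type inequality behind the boundary estimate
`F(f, U^q/q, U, 1) ≤ F₁ + F₂` of the DG(p)-method: for even `q ≥ 2`,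
interior trace `a = U⁺` and boundary datum `g = g_D`,
`3 |a − g| |g|^(q−1)
   ≤ (a − g)(a^(q−1) − g^(q−1)) + (q−1) q^(−q/(q−1)) 3^(q/(q−1)) 2^((q−2)/(q−1)) g^q`. -/
theorem boundary_young_inequality (q : ℕ) (hq : 2 ≤ q) (hqe : Even q) (a g : ℝ) :
    3 * |a - g| * |g| ^ (q - 1) ≤
      (a - g) * (a ^ (q - 1) - g ^ (q - 1)) +
        ((q : ℝ) - 1) * (q : ℝ) ^ (-(q : ℝ) / ((q : ℝ) - 1)) *
          (3 : ℝ) ^ ((q : ℝ) / ((q : ℝ) - 1)) *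
          (2 : ℝ) ^ (((q : ℝ) - 2) / ((q : ℝ) - 1)) * g ^ q := by
  have hq1 : ((q - 1 : ℕ) : ℝ) = q - 1 := by rw [Nat.cast_sub (by omega)]; norm_num
  have hq2 : (2 : ℝ) - q = -((q - 2 : ℕ) : ℝ) := by rw [Nat.cast_sub hq]; ring
  have hjump : (2 : ℝ) ^ (2 - (q : ℝ)) * |a - g| ^ (q : ℝ) ≤
      (a - g) * (a ^ (q - 1) - g ^ (q - 1)) := by
    rw [Real.rpow_natCast, hq2, Real.rpow_neg zero_le_two, Real.rpow_natCast,
      inv_mul_le_iff₀ (by positivity)]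
    exact hqe.abs_sub_pow_le (by omega) a g
  have hweight : ((2 : ℝ) ^ (2 - (q : ℝ))) ^ (-1 / ((q : ℝ) - 1)) =
      2 ^ (((q : ℝ) - 2) / ((q : ℝ) - 1)) := by
    rw [← Real.rpow_mul zero_le_two]
    ring_nf
  have hdual : (3 * |g| ^ (q - 1)) ^ ((q : ℝ) / ((q : ℝ) - 1)) =
      3 ^ ((q : ℝ) / ((q : ℝ) - 1)) * g ^ q := by
    have hq0 : (q : ℝ) - 1 ≠ 0 := by rw [← hq1]; exact_mod_cast (by omega : q - 1 ≠ 0)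
    rw [Real.mul_rpow zero_le_three (by positivity), ← Real.rpow_natCast,
      ← Real.rpow_mul (abs_nonneg g), hq1, mul_div_cancel₀ _ hq0, Real.rpow_natCast, hqe.pow_abs]
  have hyoung := Real.young_inequality_of_nonneg_weighted (abs_nonneg (a - g))
    (by positivity : 0 ≤ 3 * |g| ^ (q - 1)) (by positivity : (0 : ℝ) < 2 ^ (2 - (q : ℝ)))
    (by exact_mod_cast hq : (1 : ℝ) < q)
  rw [hweight, hdual] at hyoung
  linarith
end
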